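/- arXiv:math/0105120 — 2 statements merged into one kernel-verified Lean document; each statement's English description precedes it below -/
import Mathlib

section
/- For every fixed a > 0 and u > 0, the function w ↦ C_a(u,w), defined for Re(w) < 0 by the convergent integral C_a(u,w) = 2∫_a^∞ cos(2πut) t^(w−1) dt, extends to an entire function of w. -/
/-!
With `b = 2πu` write `2 cos (b t) = e^{ibt} + e^{-ibt}`. For `Re w < 0`, Cauchy's theorem on the
half-strips `[a, R] × [0, ∞)` turns `∫_a^∞ e^{ibt} t^{w-1} dt` into
`i ∫_0^∞ e^{ib(a+iy)} (a+iy)^{w-1} dy`.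
On this vertical ray the integrand decays like `e^{-by}` while `|(a+iy)^{w-1}|` grows only
polynomially in `y`, locally uniformly in `w`, so the vertical integral is entire by
differentiation under the integral sign. The `e^{-ibt}` half is the complex conjugate of the
first one at `conj w`.
-/

open MeasureTheory Complex Set Real Filter Topology Asymptotics ComplexConjugate

noncomputable section

lemma norm_cpow_le_rpow_mul_exp {z s : ℂ} {x : ℝ} (hx : 0 < x) (hxz : x ≤ ‖z‖) (hs : s.re ≤ 0) :
    ‖z ^ s‖ ≤ x ^ s.re * Real.exp (π * |s.im|) := by
  refine (norm_cpow_le z s).trans ?_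
  rw [div_eq_mul_inv, ← Real.exp_neg]
  refine mul_le_mul (Real.rpow_le_rpow_of_nonpos hx hxz hs) (Real.exp_le_exp.2 ?_)
    (by positivity) (by positivity)
  calc -(arg z * s.im) ≤ |arg z| * |s.im| := by rw [← abs_mul]; exact neg_le_abs _
    _ ≤ π * |s.im| := by gcongr; exact abs_arg_le_pi z

lemma norm_cpow_le_exp_mul_norm_log (z s : ℂ) : ‖z ^ s‖ ≤ Real.exp (‖s‖ * ‖log z‖) := by
  rcases eq_or_ne z 0 with rfl | hz
  · rcases eq_or_ne s 0 with rfl | hs <;> simp [*]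
  · rw [cpow_def_of_ne_zero hz, mul_comm, ← norm_mul]
    exact norm_exp_le_exp_norm _

lemma norm_cpow_mul_log_le (z s : ℂ) : ‖z ^ s * log z‖ ≤ Real.exp ((‖s‖ + 1) * ‖log z‖) := by
  rw [norm_mul, add_mul, one_mul, Real.exp_add]
  exact mul_le_mul (norm_cpow_le_exp_mul_norm_log z s)
    ((le_add_of_nonneg_right zero_le_one).trans (Real.add_one_le_exp _))
    (norm_nonneg _) (Real.exp_nonneg _)

lemma abs_log_le_log_add_inv {a x : ℝ} (ha : 0 < a) (hx : a ≤ x) :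
    |Real.log x| ≤ Real.log (x + a⁻¹) := by
  have hinv : 0 < a⁻¹ := inv_pos.2 ha
  rw [abs_le]
  constructor
  · have h := Real.log_le_log hinv (le_add_of_nonneg_left (ha.le.trans hx))
    rw [Real.log_inv] at h
    linarith [Real.log_le_log ha hx]
  · exact Real.log_le_log (ha.trans_le hx) (le_add_of_nonneg_right hinv.le)

lemma norm_log_le_log_add_inv_add_pi {a : ℝ} {z : ℂ} (ha : 0 < a) (hz : a ≤ z.re) :
    ‖log z‖ ≤ Real.log (‖z‖ + a⁻¹) + π :=
  calc ‖log z‖ ≤ |(log z).re| + |(log z).im| := norm_le_abs_re_add_abs_im _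
    _ ≤ Real.log (‖z‖ + a⁻¹) + π := by
      rw [log_re, log_im]
      exact add_le_add (abs_log_le_log_add_inv ha (hz.trans (re_le_norm z))) (abs_arg_le_pi z)

lemma integrableOn_exp_neg_mul_mul_add_rpow {b c : ℝ} (hb : 0 < b) (hc : 0 < c) (k : ℝ) :
    IntegrableOn (fun y => Real.exp (-(b * y)) * (y + c) ^ k) (Ioi 0) := by
  have hpow : (fun y : ℝ => (y + c) ^ k) =O[atTop] fun y => Real.exp (b / 2 * y) := by
    have h := (isLittleO_rpow_exp_pos_mul_atTop k (half_pos hb)).isBigO.comp_tendsto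
      (tendsto_atTop_add_const_right _ c tendsto_id)
    have hshift : (fun y : ℝ => Real.exp (b / 2 * (y + c))) =
        fun y => Real.exp (b / 2 * c) * Real.exp (b / 2 * y) := by
      ext y; rw [← Real.exp_add]; ring_nf
    exact (h.congr_right (congrFun hshift)).trans (isBigO_const_mul_self _ _ _)
  refine integrable_of_isBigO_exp_neg (half_pos hb) ?_ ?_
  · refine ContinuousOn.mul (by fun_prop) (ContinuousOn.rpow_const (by fun_prop) fun y hy => ?_)
    exact Or.inl (by simp only [mem_Ici] at hy; linarith)
  · refine ((isBigO_refl (fun y : ℝ => Real.exp (-(b * y))) atTop).mul hpow).congr_right ?_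
    intro y; rw [← Real.exp_add]; ring_nf

section RayRotation

variable {E : Type*} [NormedAddCommGroup E] {f : ℂ → E} {a : ℝ} {g h : ℝ → ℝ}

lemma continuous_vertical_of_continuousOn (hf : ContinuousOn f {z | a ≤ z.re}) {x : ℝ}
    (hx : a ≤ x) :
    Continuous fun y : ℝ => f (x + y * I) :=
  hf.comp_continuous (by fun_prop) fun y => by simpa using hx

lemma integrableOn_vertical_of_norm_le (hf : ContinuousOn f {z | a ≤ z.re})
    (hbound : ∀ x, a ≤ x → ∀ y : ℝ, 0 ≤ y → ‖f (x + y * I)‖ ≤ g x * h y)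
    (hh : IntegrableOn h (Ioi 0)) {x : ℝ} (hx : a ≤ x) :
    IntegrableOn (fun y : ℝ => f (x + y * I)) (Ioi 0) := by
  refine Integrable.mono' (hh.const_mul (g x))
    (continuous_vertical_of_continuousOn hf hx).aestronglyMeasurable.restrict ?_
  filter_upwards [ae_restrict_mem measurableSet_Ioi] with y hy
  exact hbound x hx y (le_of_lt hy)

lemma integrableOn_Ioi_of_norm_le (hf : ContinuousOn f {z | a ≤ z.re})
    (hbound : ∀ x, a ≤ x → ∀ y : ℝ, 0 ≤ y → ‖f (x + y * I)‖ ≤ g x * h y)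
    (hg : IntegrableOn g (Ioi a)) :
    IntegrableOn (fun t : ℝ => f t) (Ioi a) := by
  have hcont : ContinuousOn (fun t : ℝ => f t) (Ici a) :=
    hf.comp continuous_ofReal.continuousOn fun t ht => by simpa using ht
  refine Integrable.mono' (hg.mul_const (h 0))
    ((hcont.mono Ioi_subset_Ici_self).aestronglyMeasurable measurableSet_Ioi) ?_
  filter_upwards [ae_restrict_mem measurableSet_Ioi] with t ht
  simpa using hbound t (le_of_lt ht) 0 le_rfl

variable [NormedSpace ℂ E]

lemma tendsto_integral_vertical_atTop
    (hbound : ∀ x, a ≤ x → ∀ y : ℝ, 0 ≤ y → ‖f (x + y * I)‖ ≤ g x * h y)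
    (hg_lim : Tendsto g atTop (𝓝 0)) (hh : IntegrableOn h (Ioi 0)) :
    Tendsto (fun x : ℝ => ∫ y in Ioi (0:ℝ), f (x + y * I)) atTop (𝓝 0) := by
  refine squeeze_zero_norm' ?_ (by simpa using hg_lim.mul_const (∫ y in Ioi (0:ℝ), h y))
  filter_upwards [eventually_ge_atTop a] with x hx
  rw [← integral_const_mul]
  refine norm_integral_le_of_norm_le (hh.const_mul (g x)) ?_
  filter_upwards [ae_restrict_mem measurableSet_Ioi] with y hy
  exact hbound x hx y (le_of_lt hy)

lemma tendsto_intervalIntegral_horizontal_atTop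
    (hbound : ∀ x, a ≤ x → ∀ y : ℝ, 0 ≤ y → ‖f (x + y * I)‖ ≤ g x * h y)
    (hg : IntegrableOn g (Ioi a)) (hh_lim : Tendsto h atTop (𝓝 0)) {R : ℝ} (hR : a ≤ R) :
    Tendsto (fun y : ℝ => ∫ x in a..R, f (x + y * I)) atTop (𝓝 0) := by
  have hgR : IntervalIntegrable g volume a R :=
    (intervalIntegrable_iff_integrableOn_Ioc_of_le hR).2 (hg.mono_set Ioc_subset_Ioi_self)
  refine squeeze_zero_norm' ?_ (by simpa using hh_lim.const_mul (∫ x in a..R, g x))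
  filter_upwards [eventually_ge_atTop 0] with y hy
  rw [← intervalIntegral.integral_mul_const]
  refine intervalIntegral.norm_integral_le_of_norm_le hR ?_ (hgR.mul_const _)
  exact Eventually.of_forall fun x hx => hbound x (le_of_lt hx.1) y hy

-- Cauchy's theorem on the rectangles `[a, R] × [0, Y]`, then `Y → ∞`.
lemma intervalIntegral_eq_I_smul_sub (hf : DifferentiableOn ℂ f {z | a ≤ z.re})
    (hbound : ∀ x, a ≤ x → ∀ y : ℝ, 0 ≤ y → ‖f (x + y * I)‖ ≤ g x * h y)
    (hg : IntegrableOn g (Ioi a)) (hh : IntegrableOn h (Ioi 0)) (hh_lim : Tendsto h atTop (𝓝 0))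
    {R : ℝ} (hR : a ≤ R) :
    ∫ x in a..R, f x = I • (∫ y in Ioi (0:ℝ), f (a + y * I)) -
      I • ∫ y in Ioi (0:ℝ), f (R + y * I) := by
  have hrect (Y : ℝ) := integral_boundary_rect_eq_zero_of_differentiableOn f a (R + Y * I)
    (hf.mono fun z hz => by
      have hre : z.re ∈ uIcc a R := by simpa using hz.1
      exact (uIcc_of_le hR ▸ hre).1)
  have hlim := ((tendsto_const_nhds (x := ∫ x in a..R, f (x + (a:ℂ).im * I))).sub
    (tendsto_intervalIntegral_horizontal_atTop hbound hg hh_lim hR)).add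
    (((intervalIntegral_tendsto_integral_Ioi 0
      (integrableOn_vertical_of_norm_le hf.continuousOn hbound hh hR) tendsto_id).const_smul I).sub
    ((intervalIntegral_tendsto_integral_Ioi 0
      (integrableOn_vertical_of_norm_le hf.continuousOn hbound hh le_rfl) tendsto_id).const_smul I))
  have hzero := tendsto_nhds_unique hlim (tendsto_const_nhds.congr fun Y => by
    simpa [add_sub_assoc] using (hrect Y).symm)
  simp only [ofReal_im, ofReal_zero, zero_mul, add_zero, sub_zero] at hzero
  rw [← sub_eq_zero, ← hzero]
  abel

lemma integral_Ioi_eq_I_smul_integral_vertical (hf : DifferentiableOn ℂ f {z | a ≤ z.re})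
    (hbound : ∀ x, a ≤ x → ∀ y : ℝ, 0 ≤ y → ‖f (x + y * I)‖ ≤ g x * h y)
    (hg : IntegrableOn g (Ioi a)) (hg_lim : Tendsto g atTop (𝓝 0))
    (hh : IntegrableOn h (Ioi 0)) (hh_lim : Tendsto h atTop (𝓝 0)) :
    ∫ t in Ioi a, f t = I • ∫ y in Ioi (0:ℝ), f (a + y * I) := by
  have hlim := (tendsto_const_nhds (x := I • ∫ y in Ioi (0:ℝ), f (a + y * I))).sub
    ((tendsto_integral_vertical_atTop hbound hg_lim hh).const_smul I)
  rw [smul_zero, sub_zero] at hlim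
  refine tendsto_nhds_unique (intervalIntegral_tendsto_integral_Ioi a
    (integrableOn_Ioi_of_norm_le hf.continuousOn hbound hg) tendsto_id) (hlim.congr' ?_)
  filter_upwards [eventually_ge_atTop a] with R hR
  exact (intervalIntegral_eq_I_smul_sub hf hbound hg hh hh_lim hR).symm

end RayRotation

def oscillatoryPow (b : ℝ) (w z : ℂ) : ℂ := cexp (I * b * z) * z ^ (w - 1)

lemma differentiableAt_oscillatoryPow (b : ℝ) (w : ℂ) {z : ℂ} (hz : 0 < z.re) :
    DifferentiableAt ℂ (oscillatoryPow b w) z :=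
  (by fun_prop : DifferentiableAt ℂ (fun z => cexp (I * b * z)) z).mul
    (differentiableAt_id.cpow_const (Or.inl hz))

lemma norm_oscillatoryPow (b : ℝ) (w z : ℂ) :
    ‖oscillatoryPow b w z‖ = Real.exp (-(b * z.im)) * ‖z ^ (w - 1)‖ := by
  simp [oscillatoryPow, Complex.norm_exp]

lemma norm_oscillatoryPow_le {b x y : ℝ} {w : ℂ} (hx : 0 < x) (hw : w.re ≤ 1) :
    ‖oscillatoryPow b w (x + y * I)‖ ≤
      x ^ (w.re - 1) * Real.exp (π * |w.im|) * Real.exp (-(b * y)) := by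
  have him : ((x:ℂ) + y * I).im = y := by simp
  rw [norm_oscillatoryPow, him, mul_comm]
  refine mul_le_mul_of_nonneg_right ?_ (Real.exp_nonneg _)
  simpa using norm_cpow_le_rpow_mul_exp (s := w - 1) hx
    (by simpa using Complex.re_le_norm ((x:ℂ) + y * I)) (by simpa using hw)

lemma integrableOn_Ioi_oscillatoryPow (b : ℝ) {a : ℝ} {w : ℂ} (ha : 0 < a) (hw : w.re < 0) :
    IntegrableOn (fun t : ℝ => oscillatoryPow b w t) (Ioi a) :=
  integrableOn_Ioi_of_norm_le (h := fun y => Real.exp (-(b * y)))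
    (fun z hz =>
      (differentiableAt_oscillatoryPow b w (ha.trans_le hz)).continuousAt.continuousWithinAt)
    (fun x hx _ _ => norm_oscillatoryPow_le (ha.trans_le hx) (by linarith))
    ((integrableOn_Ioi_rpow_of_lt (by linarith) ha).mul_const _)

lemma hasDerivAt_oscillatoryPow_exponent (b : ℝ) {z : ℂ} (hz : z ≠ 0) (w : ℂ) :
    HasDerivAt (fun w => oscillatoryPow b w z) (oscillatoryPow b w z * log z) w := by
  have h := ((hasDerivAt_id w).sub_const 1).const_cpow (c := z) (Or.inl hz)
  simpa [oscillatoryPow, mul_assoc] using h.const_mul (cexp (I * b * z))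

lemma exp_mul_norm_log_vertical_le {a y k : ℝ} (ha : 0 < a) (hy : 0 ≤ y) (hk : 0 ≤ k) :
    Real.exp (k * ‖log (a + y * I)‖) ≤ Real.exp (k * π) * (y + (a + a⁻¹)) ^ k := by
  have hnorm : ‖(a:ℂ) + y * I‖ ≤ a + y := by
    simpa [abs_of_pos ha, abs_of_nonneg hy] using norm_add_le (a:ℂ) (y * I)
  have hlog : ‖log ((a:ℂ) + y * I)‖ ≤ Real.log (y + (a + a⁻¹)) + π := by
    refine (norm_log_le_log_add_inv_add_pi (z := a + y * I) ha (by simp)).trans ?_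
    have hpos : 0 < ‖(a:ℂ) + y * I‖ + a⁻¹ := by positivity
    linarith [Real.log_le_log hpos (show ‖(a:ℂ) + y * I‖ + a⁻¹ ≤ y + (a + a⁻¹) by linarith)]
  calc Real.exp (k * ‖log (a + y * I)‖) ≤ Real.exp (k * (Real.log (y + (a + a⁻¹)) + π)) := by
        gcongr
    _ = Real.exp (k * π) * (y + (a + a⁻¹)) ^ k := by
        rw [Real.rpow_def_of_pos (by positivity), ← Real.exp_add]
        ring_nf

section VerticalBounds

variable {a b y k : ℝ} {w : ℂ}

lemma norm_oscillatoryPow_vertical_le (ha : 0 < a) (hy : 0 ≤ y) (hk : ‖w - 1‖ + 1 ≤ k) :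
    ‖oscillatoryPow b w (a + y * I)‖ ≤
      Real.exp (k * π) * (Real.exp (-(b * y)) * (y + (a + a⁻¹)) ^ k) := by
  have hexp := exp_mul_norm_log_vertical_le ha hy ((by positivity : (0:ℝ) ≤ ‖w - 1‖ + 1).trans hk)
  rw [norm_oscillatoryPow, show ((a:ℂ) + y * I).im = y by simp, mul_left_comm]
  refine mul_le_mul_of_nonneg_left ?_ (Real.exp_nonneg _)
  refine (norm_cpow_le_exp_mul_norm_log _ _).trans (le_trans ?_ (by simpa using hexp))
  gcongr
  linarith

lemma norm_oscillatoryPow_mul_log_vertical_le (ha : 0 < a) (hy : 0 ≤ y) (hk : ‖w - 1‖ + 1 ≤ k) :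
    ‖oscillatoryPow b w (a + y * I) * log (a + y * I)‖ ≤
      Real.exp (k * π) * (Real.exp (-(b * y)) * (y + (a + a⁻¹)) ^ k) := by
  have hexp := exp_mul_norm_log_vertical_le ha hy ((by positivity : (0:ℝ) ≤ ‖w - 1‖ + 1).trans hk)
  rw [oscillatoryPow, mul_assoc, norm_mul, Complex.norm_exp, mul_left_comm]
  refine mul_le_mul (by simp) ((norm_cpow_mul_log_le _ _).trans ?_) (norm_nonneg _)
    (Real.exp_nonneg _)
  refine le_trans ?_ hexp
  gcongr

end VerticalBounds

def verticalIntegral (a b : ℝ) (w : ℂ) : ℂ := ∫ y in Ioi (0:ℝ), oscillatoryPow b w (a + y * I)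

lemma differentiable_verticalIntegral {a b : ℝ} (ha : 0 < a) (hb : 0 < b) :
    Differentiable ℂ (verticalIntegral a b) := by
  intro w₀
  set k := ‖w₀ - 1‖ + 2
  have hk : ∀ w ∈ Metric.ball w₀ 1, ‖w - 1‖ + 1 ≤ k := fun w hw => by
    have := norm_sub_le_norm_sub_add_norm_sub w w₀ 1
    rw [Metric.mem_ball, dist_eq_norm] at hw
    linarith
  have hre (y : ℝ) : 0 < ((a:ℂ) + y * I).re := by simp [ha]
  have hline : Continuous fun y : ℝ => (a:ℂ) + y * I := by fun_prop
  have hF (w : ℂ) : Continuous fun y : ℝ => oscillatoryPow b w (a + y * I) :=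
    continuous_iff_continuousAt.2 fun y =>
      ContinuousAt.comp (f := fun y : ℝ => (a:ℂ) + y * I)
        (differentiableAt_oscillatoryPow b w (hre y)).continuousAt hline.continuousAt
  have hlog : Continuous fun y : ℝ => log ((a:ℂ) + y * I) :=
    continuous_iff_continuousAt.2 fun y =>
      ContinuousAt.comp (f := fun y : ℝ => (a:ℂ) + y * I)
        (continuousAt_clog (Or.inl (hre y))) hline.continuousAt
  have hbound : IntegrableOn
      (fun y => Real.exp (k * π) * (Real.exp (-(b * y)) * (y + (a + a⁻¹)) ^ k)) (Ioi 0) :=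
    (integrableOn_exp_neg_mul_mul_add_rpow hb (by positivity) k).const_mul _
  refine (hasDerivAt_integral_of_dominated_loc_of_deriv_le
    (F' := fun w y => oscillatoryPow b w (a + y * I) * log (a + y * I))
    (Metric.ball_mem_nhds w₀ one_pos)
    (Eventually.of_forall fun w => (hF w).aestronglyMeasurable)
    (hbound.mono' (hF w₀).aestronglyMeasurable ?_) ((hF w₀).mul hlog).aestronglyMeasurable
    ?_ hbound ?_).2.differentiableAt
  all_goals filter_upwards [ae_restrict_mem measurableSet_Ioi] with y (hy : 0 < y)
  · exact norm_oscillatoryPow_vertical_le ha hy.le (hk w₀ (Metric.mem_ball_self one_pos))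
  · exact fun w hw => norm_oscillatoryPow_mul_log_vertical_le ha hy.le (hk w hw)
  · exact fun w _ => hasDerivAt_oscillatoryPow_exponent b (fun h => (hre y).ne' (by simp [h])) w

lemma integral_Ioi_oscillatoryPow {a b : ℝ} {w : ℂ} (ha : 0 < a) (hb : 0 < b) (hw : w.re < 0) :
    ∫ t in Ioi a, oscillatoryPow b w t = I * verticalIntegral a b w := by
  have hg_lim : Tendsto (fun x : ℝ => x ^ (w.re - 1) * Real.exp (π * |w.im|)) atTop (𝓝 0) := by
    simpa using (tendsto_rpow_neg_atTop (y := 1 - w.re) (by linarith)).mul_const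
      (Real.exp (π * |w.im|))
  have hh_lim : Tendsto (fun y : ℝ => Real.exp (-(b * y))) atTop (𝓝 0) :=
    Real.tendsto_exp_atBot.comp (tendsto_neg_atTop_atBot.comp (tendsto_id.const_mul_atTop hb))
  exact integral_Ioi_eq_I_smul_integral_vertical
    (fun z hz => (differentiableAt_oscillatoryPow b w (ha.trans_le hz)).differentiableWithinAt)
    (fun x hx _ _ => norm_oscillatoryPow_le (ha.trans_le hx) (by linarith))
    ((integrableOn_Ioi_rpow_of_lt (by linarith) ha).mul_const _) hg_lim
    (by simpa using exp_neg_integrableOn_Ioi 0 hb) hh_lim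

lemma conj_oscillatoryPow_ofReal (b : ℝ) (w : ℂ) {t : ℝ} (ht : 0 ≤ t) :
    conj (oscillatoryPow b (conj w) t) = oscillatoryPow (-b) w t := by
  have harg : arg (t:ℂ) ≠ π := by rw [arg_ofReal_of_nonneg ht]; exact pi_ne_zero.symm
  have hpow := conj_cpow (t:ℂ) (w - 1) harg
  rw [conj_ofReal, map_sub, map_one] at hpow
  rw [oscillatoryPow, oscillatoryPow, map_mul, ← hpow, ← exp_conj]
  simp

lemma integral_Ioi_oscillatoryPow_neg {a b : ℝ} {w : ℂ} (ha : 0 < a) (hb : 0 < b) (hw : w.re < 0) :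
    ∫ t in Ioi a, oscillatoryPow (-b) w t = -I * conj (verticalIntegral a b (conj w)) := by
  rw [← setIntegral_congr_fun measurableSet_Ioi
      fun t ht => conj_oscillatoryPow_ofReal b w (ha.le.trans (le_of_lt ht)),
    integral_conj, integral_Ioi_oscillatoryPow ha hb (by simpa using hw), map_mul, conj_I]

lemma two_mul_integral_Ioi_cos_mul_cpow {a : ℝ} {w : ℂ} (b : ℝ) (ha : 0 < a) (hw : w.re < 0) :
    2 * ∫ t in Ioi a, (Real.cos (b * t) : ℂ) * (t : ℂ) ^ (w - 1) =
      (∫ t in Ioi a, oscillatoryPow b w t) + ∫ t in Ioi a, oscillatoryPow (-b) w t := by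
  rw [← integral_add (integrableOn_Ioi_oscillatoryPow b ha hw)
    (integrableOn_Ioi_oscillatoryPow (-b) ha hw), ← integral_const_mul]
  refine setIntegral_congr_fun measurableSet_Ioi fun t _ => ?_
  rw [oscillatoryPow, oscillatoryPow, ← mul_assoc, ofReal_cos, two_cos, ← add_mul]
  congr 2 <;> push_cast <;> ring_nf

/-- for fixed `a > 0` and `u > 0`, the function `w ↦ C_a(u,w)`, defined for
`Re(w) < 0` by `C_a(u,w) = 2∫_a^∞ cos(2πut) t^(w−1) dt`, extends to an entire function. -/
theorem statement4 (a u : ℝ) (ha : 0 < a) (hu : 0 < u) :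
    ∃ C : ℂ → ℂ, Differentiable ℂ C ∧
      ∀ w : ℂ, w.re < 0 →
        C w = 2 * ∫ t in Ioi a, (Real.cos (2 * π * u * t) : ℂ) * (t : ℂ) ^ (w - 1) := by
  set b := 2 * π * u
  have hb : 0 < b := by positivity
  have hV := differentiable_verticalIntegral ha hb
  refine ⟨fun w => I * verticalIntegral a b w - I * conj (verticalIntegral a b (conj w)),
    (hV.const_mul I).sub fun w => (differentiableAt_conj_conj_iff.2 (hV _)).const_mul I,
    fun w hw => ?_⟩
  rw [two_mul_integral_Ioi_cos_mul_cpow b ha hw, integral_Ioi_oscillatoryPow ha hb hw,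
    integral_Ioi_oscillatoryPow_neg ha hb hw]
  ring
end
end

section
/- Let a > 0 and u > 0. For every complex w with Re(w) > 0, the entire extension C_a(u,w) of 2∫_a^∞ cos(2πut) t^(w−1) dt satisfies C_a(u,w) = γ₊(w) u^(−w) − 2∫₀^a cos(2πut) t^(w−1) dt = γ₊(w) u^(−w) − 2 Σ_{j=0}^∞ ((−1)^j / (2j)!) (2πu)^(2j) a^(2j+w) / (2j + w), where γ₊(w) = 2(2π)^(−w) cos(πw/2) Γ(w). -/
/-!
Write `2 cos(νt) = e^{iνt} + e^{-iνt}` with `ν = 2πu`. For `Re w < 0` one integration by parts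
turns `∫_a^∞ e^{±iνt} t^{w-1} dt` into a boundary term plus an absolutely convergent integral of
`e^{±iνt} t^{w-2}`; the result is holomorphic on `Re w < 1`, so `C` agrees with it there.
For `0 < Re w < 1` and `Re z < 0` the Gamma integral splits as
`Γ(w) (-z)^(-w) = ∫_0^a e^{zt} t^{w-1} dt + ∫_a^∞ e^{zt} t^{w-1} dt`, and after the same integration
by parts both sides are continuous up to `z = ±iν`. Adding the two signs shows that on the strip
`C(w) = γ₊(w) u^(-w) - 2 ∫_0^a cos(2πut) t^{w-1} dt`; the right side is holomorphic on `Re w > 0`,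
hence equal to `C` there. The series comes from integrating the Taylor series of the cosine
termwise.
-/

open MeasureTheory Complex Set Real

noncomputable section

/-- `γ₊(s) = 2(2π)^(−s) cos(πs/2) Γ(s)`. -/
def gammaPlus (s : ℂ) : ℂ :=
  2 * (2 * (π : ℂ)) ^ (-s) * Complex.cos (π * s / 2) * Complex.Gamma s

open Filter Asymptotics

open scoped Topology Nat

section ExpCpow

variable {z q : ℂ} {S : Set ℝ}

lemma norm_cexp_mul_cpow (z q : ℂ) {t : ℝ} (ht : 0 < t) :
    ‖cexp (z * t) * (t : ℂ) ^ q‖ = Real.exp (z.re * t) * t ^ q.re := by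
  rw [norm_mul, Complex.norm_exp, Complex.norm_cpow_eq_rpow_re_of_pos ht, re_mul_ofReal]

lemma norm_cexp_mul_cpow_le (hz : z.re ≤ 0) (q : ℂ) {t : ℝ} (ht : 0 < t) :
    ‖cexp (z * t) * (t : ℂ) ^ q‖ ≤ t ^ q.re := by
  rw [norm_cexp_mul_cpow z q ht]
  exact mul_le_of_le_one_left (rpow_nonneg ht.le _)
    (Real.exp_le_one_iff.mpr (mul_nonpos_of_nonpos_of_nonneg hz ht.le))

lemma continuousOn_cexp_mul_cpow (z q : ℂ) :
    ContinuousOn (fun t : ℝ => cexp (z * t) * (t : ℂ) ^ q) (Ioi 0) := fun t ht =>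
  ((by fun_prop : Continuous fun t : ℝ => cexp (z * t)).continuousAt.mul
    (continuousAt_ofReal_cpow_const t q (Or.inr (ne_of_gt ht)))).continuousWithinAt

lemma aestronglyMeasurable_cexp_mul_cpow (hS : MeasurableSet S) (hS₀ : S ⊆ Ioi 0) (z q : ℂ) :
    AEStronglyMeasurable (fun t : ℝ => cexp (z * t) * (t : ℂ) ^ q) (volume.restrict S) :=
  ((continuousOn_cexp_mul_cpow z q).mono hS₀).aestronglyMeasurable hS

lemma integrableOn_cexp_mul_cpow (hS : MeasurableSet S) (hS₀ : S ⊆ Ioi 0) (hz : z.re ≤ 0)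
    (hq : IntegrableOn (fun t : ℝ => t ^ q.re) S) :
    IntegrableOn (fun t : ℝ => cexp (z * t) * (t : ℂ) ^ q) S :=
  hq.mono' (aestronglyMeasurable_cexp_mul_cpow hS hS₀ z q) <| by
    filter_upwards [ae_restrict_mem hS] with t ht using norm_cexp_mul_cpow_le hz q (hS₀ ht)

lemma continuousOn_integral_cexp_mul_cpow (hS : MeasurableSet S) (hS₀ : S ⊆ Ioi 0)
    (hq : IntegrableOn (fun t : ℝ => t ^ q.re) S) :
    ContinuousOn (fun z : ℂ => ∫ t in S, cexp (z * t) * (t : ℂ) ^ q) {z | z.re ≤ 0} :=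
  continuousOn_of_dominated (fun z _ => aestronglyMeasurable_cexp_mul_cpow hS hS₀ z q)
    (fun z hz => by
      filter_upwards [ae_restrict_mem hS] with t ht using norm_cexp_mul_cpow_le hz q (hS₀ ht))
    hq (Eventually.of_forall fun t => by fun_prop)

lemma integrableOn_Ioi_cexp_mul_cpow (hz : z.re < 0) (hq : -1 < q.re) :
    IntegrableOn (fun t : ℝ => cexp (z * t) * (t : ℂ) ^ q) (Ioi 0) := by
  refine (integrableOn_rpow_mul_exp_neg_mul_rpow hq one_pos (neg_pos.mpr hz)).mono'
    (aestronglyMeasurable_cexp_mul_cpow measurableSet_Ioi subset_rfl z q) ?_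
  filter_upwards [ae_restrict_mem measurableSet_Ioi] with t ht
  rw [norm_cexp_mul_cpow z q ht, rpow_one, neg_neg, mul_comm]

end ExpCpow

section IdentityTheorem

variable {f g : ℂ → ℂ} {U : Set ℂ}

lemma AnalyticOnNhd.eqOn_of_eventuallyEq_ofReal (hf : AnalyticOnNhd ℂ f U)
    (hg : AnalyticOnNhd ℂ g U) (hU : IsPreconnected U) {x : ℝ} (hx : (x : ℂ) ∈ U)
    (hfg : ∀ᶠ y : ℝ in 𝓝 x, f y = g y) : EqOn f g U := by
  have hreal : Tendsto ((↑) : ℝ → ℂ) (𝓝[≠] x) (𝓝[≠] (x : ℂ)) :=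
    continuous_ofReal.continuousWithinAt.tendsto_nhdsWithin fun y hy => by simpa using hy
  exact hf.eqOn_of_preconnected_of_frequently_eq hg hU hx
    (hreal.frequently (hfg.filter_mono nhdsWithin_le_nhds).frequently)

lemma DifferentiableOn.eqOn_of_eqOn_isOpen (hf : DifferentiableOn ℂ f U)
    (hg : DifferentiableOn ℂ g U) (hU : IsOpen U) (hU' : IsPreconnected U) {V : Set ℂ}
    (hV : IsOpen V) (hVU : V ⊆ U) {v : ℂ} (hv : v ∈ V) (hfg : EqOn f g V) : EqOn f g U :=
  (hf.analyticOnNhd hU).eqOn_of_preconnected_of_eventuallyEq (hg.analyticOnNhd hU) hU' (hVU hv)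
    (eventually_of_mem (hV.mem_nhds hv) hfg)

end IdentityTheorem

lemma differentiableOn_integral_Ioi_cexp_mul_cpow {q : ℂ} (hq : -1 < q.re) :
    DifferentiableOn ℂ (fun z : ℂ => ∫ t in Ioi (0 : ℝ), cexp (z * t) * (t : ℂ) ^ q)
      {z | z.re < 0} := by
  intro z₀ (hz₀ : z₀.re < 0)
  obtain ⟨δ, hδ, hz₀δ⟩ : ∃ δ : ℝ, 0 < δ ∧ z₀.re = -2 * δ := ⟨-z₀.re / 2, by linarith, by ring⟩
  have hball : ∀ z ∈ Metric.ball z₀ δ, z.re ≤ -δ := fun z hz => by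
    have := (abs_re_le_norm (z - z₀)).trans (mem_ball_iff_norm.mp hz).le
    rw [sub_re, abs_le] at this
    linarith
  have hmeas (z p : ℂ) := aestronglyMeasurable_cexp_mul_cpow measurableSet_Ioi subset_rfl z p
  have hderiv := hasDerivAt_integral_of_dominated_loc_of_deriv_le
    (F := fun z (t : ℝ) => cexp (z * t) * (t : ℂ) ^ q)
    (F' := fun z (t : ℝ) => cexp (z * t) * (t : ℂ) ^ (q + 1))
    (bound := fun t : ℝ => ‖cexp ((-δ : ℝ) * t) * (t : ℂ) ^ (q + 1)‖)
    (Metric.ball_mem_nhds z₀ hδ) (Eventually.of_forall fun z => hmeas z q)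
    (integrableOn_Ioi_cexp_mul_cpow hz₀ hq) (hmeas z₀ (q + 1)) ?_
    (integrableOn_Ioi_cexp_mul_cpow (by simpa using hδ)
      (by simp only [add_re, one_re]; linarith)).norm ?_
  · exact hderiv.2.differentiableAt.differentiableWithinAt
  · filter_upwards [ae_restrict_mem measurableSet_Ioi] with t (ht : 0 < t) z hz
    rw [norm_cexp_mul_cpow _ _ ht, norm_cexp_mul_cpow _ _ ht, ofReal_re]
    gcongr
    exact hball z hz
  · filter_upwards [ae_restrict_mem measurableSet_Ioi] with t (ht : 0 < t) z _
    have h := ((hasDerivAt_id z).mul_const (t : ℂ)).cexp.mul_const ((t : ℂ) ^ q)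
    rw [cpow_add _ _ (ofReal_ne_zero.mpr ht.ne'), cpow_one]
    simpa only [id, one_mul, mul_assoc, mul_comm (t : ℂ)] using h

lemma integral_Ioi_cexp_mul_cpow_eq_Gamma {v z : ℂ} (hv : 0 < v.re) (hz : z.re < 0) :
    ∫ t in Ioi (0 : ℝ), cexp (z * t) * (t : ℂ) ^ (v - 1) = Gamma v * (-z) ^ (-v) := by
  have hopen : IsOpen {z : ℂ | z.re < 0} := isOpen_lt continuous_re continuous_const
  have hlhs := (differentiableOn_integral_Ioi_cexp_mul_cpow (q := v - 1)
    (by simp only [sub_re, one_re]; linarith)).analyticOnNhd hopen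
  have hrhs : AnalyticOnNhd ℂ (fun z : ℂ => Gamma v * (-z) ^ (-v)) {z | z.re < 0} := by
    refine DifferentiableOn.analyticOnNhd (fun z hz => ?_) hopen
    refine (((hasDerivAt_neg z).cpow_const (Or.inl ?_)).differentiableAt.const_mul _)
      |>.differentiableWithinAt
    simpa [neg_re] using hz
  refine hlhs.eqOn_of_eventuallyEq_ofReal hrhs (convex_halfSpace_re_lt 0).isPreconnected
    (x := -1) (by simp) ?_ hz
  filter_upwards [eventually_lt_nhds (neg_one_lt_zero : (-1 : ℝ) < 0)] with r hr
  have hr' : 0 < -r := neg_pos.mpr hr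
  have h := integral_cpow_mul_exp_neg_mul_Ioi hv hr'
  simp only [ofReal_neg, neg_mul, neg_neg] at h
  rw [one_div, ← ofReal_neg,
    inv_cpow _ _ (by rw [arg_ofReal_of_nonneg hr'.le]; exact pi_ne_zero.symm)] at h
  rw [← ofReal_neg, cpow_neg, mul_comm, ← h]
  exact setIntegral_congr_fun measurableSet_Ioi fun t _ => mul_comm _ _

lemma tendsto_cexp_mul_cpow_atTop {z q : ℂ} (hz : z.re ≤ 0) (hq : q.re < 0) :
    Tendsto (fun t : ℝ => cexp (z * t) * (t : ℂ) ^ q) atTop (𝓝 0) := by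
  refine squeeze_zero_norm' ?_ (tendsto_rpow_neg_atTop (neg_pos.mpr hq) |>.congr fun t => by
    rw [neg_neg])
  filter_upwards [eventually_gt_atTop 0] with t ht using norm_cexp_mul_cpow_le hz q ht

/-- For `Re z ≤ 0`, `z ≠ 0`, one integration by parts continues `v ↦ ∫_a^∞ e^{zt} t^{v-1} dt`
holomorphically from `Re v < 0` to `Re v < 1`. -/
def tailIBP (a : ℝ) (z v : ℂ) : ℂ :=
  -(cexp (z * a) * (a : ℂ) ^ (v - 1) / z)
    - (v - 1) / z * ∫ t in Ioi a, cexp (z * t) * (t : ℂ) ^ (v - 2)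

section TailIBP

variable {a : ℝ} {z v : ℂ}

lemma integral_Ioi_cexp_mul_cpow_eq_tailIBP (ha : 0 < a) (hz : z.re ≤ 0) (hz₀ : z ≠ 0)
    (hv : v.re < 1)
    (hint : IntegrableOn (fun t : ℝ => cexp (z * t) * (t : ℂ) ^ (v - 1)) (Ioi a)) :
    ∫ t in Ioi a, cexp (z * t) * (t : ℂ) ^ (v - 1) = tailIBP a z v := by
  have hint' : IntegrableOn (fun t : ℝ => cexp (z * t) * (t : ℂ) ^ (v - 2)) (Ioi a) :=
    integrableOn_cexp_mul_cpow measurableSet_Ioi (Ioi_subset_Ioi ha.le) hz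
      (integrableOn_Ioi_rpow_of_lt (by simp only [sub_re, re_ofNat]; linarith) ha)
  have hexp (t : ℝ) : HasDerivAt (fun y : ℝ => cexp (z * y) / z) (cexp (z * t)) t := by
    simpa [mul_div_cancel_right₀ _ hz₀] using
      (((hasDerivAt_id (t : ℂ)).const_mul z).cexp.comp_ofReal).div_const z
  have hpow (t : ℝ) (ht : t ∈ Ioi a) :
      HasDerivAt (fun y : ℝ => (y : ℂ) ^ (v - 1)) ((v - 1) * (t : ℂ) ^ (v - 2)) t := by
    have hv₁ : v - 1 ≠ 0 := fun h => by simp [sub_eq_zero.mp h] at hv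
    simpa [sub_sub, one_add_one_eq_two] using
      hasDerivAt_ofReal_cpow_const (ha.trans ht).ne' hv₁
  have hcont : ContinuousAt (fun t : ℝ => cexp (z * t) / z * (t : ℂ) ^ (v - 1)) a :=
    (hexp a).continuousAt.mul (continuousAt_ofReal_cpow_const a _ (Or.inr ha.ne'))
  have hsum : ∫ t in Ioi a, (cexp (z * t) * (t : ℂ) ^ (v - 1)
        + cexp (z * t) / z * ((v - 1) * (t : ℂ) ^ (v - 2)))
      = (∫ t in Ioi a, cexp (z * t) * (t : ℂ) ^ (v - 1))
        + (v - 1) / z * ∫ t in Ioi a, cexp (z * t) * (t : ℂ) ^ (v - 2) := by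
    rw [← integral_const_mul, ← integral_add hint (hint'.const_mul _)]
    exact setIntegral_congr_fun measurableSet_Ioi fun t _ => by ring
  have hinfty : Tendsto (fun t : ℝ => cexp (z * t) / z * (t : ℂ) ^ (v - 1)) atTop (𝓝 0) := by
    simpa [div_mul_eq_mul_div] using (tendsto_cexp_mul_cpow_atTop hz (q := v - 1)
      (by simp only [sub_re, one_re]; linarith)).div_const z
  have key := integral_Ioi_deriv_mul_eq_sub (fun t _ => hexp t) hpow
    ((hint.add (hint'.const_mul ((v - 1) / z))).congr_fun
      (fun t _ => by simp only [Pi.add_apply, Pi.mul_apply]; ring) measurableSet_Ioi)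
    (hcont.tendsto.mono_left nhdsWithin_le_nhds) hinfty
  rw [hsum] at key
  rw [tailIBP]
  linear_combination key

lemma gamma_mul_neg_cpow_eq_of_re_neg (ha : 0 < a) (hv₀ : 0 < v.re) (hv₁ : v.re < 1)
    (hz : z.re < 0) :
    Gamma v * (-z) ^ (-v)
      = (∫ t in Ioo (0 : ℝ) a, cexp (z * t) * (t : ℂ) ^ (v - 1)) + tailIBP a z v := by
  have hint := integrableOn_Ioi_cexp_mul_cpow hz (q := v - 1)
    (by simp only [sub_re, one_re]; linarith)
  rw [← integral_Ioi_cexp_mul_cpow_eq_Gamma hv₀ hz,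
    ← integral_Ioi_cexp_mul_cpow_eq_tailIBP ha hz.le (ne_of_apply_ne re hz.ne) hv₁
    (hint.mono_set (Ioi_subset_Ioi ha.le)), ← integral_Ioc_eq_integral_Ioo,
    ← setIntegral_union (Ioc_disjoint_Ioi le_rfl) measurableSet_Ioi
      (hint.mono_set Ioc_subset_Ioi_self) (hint.mono_set (Ioi_subset_Ioi ha.le)),
    Ioc_union_Ioi_eq_Ioi ha.le]

lemma continuousOn_tailIBP (ha : 0 < a) (hv : v.re < 1) :
    ContinuousOn (fun z => tailIBP a z v) ({z : ℂ | z.re ≤ 0} ∩ {0}ᶜ) := by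
  have hz₀ : ∀ z ∈ {z : ℂ | z.re ≤ 0} ∩ {0}ᶜ, z ≠ 0 := fun z hz => hz.2
  have htail := (continuousOn_integral_cexp_mul_cpow measurableSet_Ioi (Ioi_subset_Ioi ha.le)
    (q := v - 2) (integrableOn_Ioi_rpow_of_lt (by simp only [sub_re, re_ofNat]; linarith) ha)).mono
    (inter_subset_left (t := ({0}ᶜ : Set ℂ)))
  exact (((by fun_prop : Continuous fun z : ℂ => cexp (z * a) * (a : ℂ) ^ (v - 1)).continuousOn.div
    continuousOn_id hz₀).neg).sub ((continuousOn_const.div continuousOn_id hz₀).mul htail)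

lemma neg_mem_slitPlane_of_re_nonpos (hz : z.re ≤ 0) (hz₀ : z ≠ 0) : -z ∈ slitPlane := by
  rcases hz.lt_or_eq with hz | hz
  · exact Or.inl (by rw [neg_re]; linarith)
  · exact Or.inr (by rw [neg_im, neg_ne_zero]; exact fun h => hz₀ (Complex.ext hz h))

/-- For `Re z = 0` the Gamma integral `∫_0^∞ e^{zt} t^{v-1} dt` converges only conditionally; its
value is recovered, through `tailIBP`, by continuity from `Re z < 0`. -/
lemma gamma_mul_neg_cpow_eq (ha : 0 < a) (hv₀ : 0 < v.re) (hv₁ : v.re < 1) (hz : z.re ≤ 0)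
    (hz₀ : z ≠ 0) :
    Gamma v * (-z) ^ (-v)
      = (∫ t in Ioo (0 : ℝ) a, cexp (z * t) * (t : ℂ) ^ (v - 1)) + tailIBP a z v := by
  refine EqOn.of_subset_closure (s := {z : ℂ | z.re < 0}) (t := {z : ℂ | z.re ≤ 0} ∩ {0}ᶜ)
    (fun z hz => gamma_mul_neg_cpow_eq_of_re_neg ha hv₀ hv₁ hz) ?_ ?_
    (fun z (hz : z.re < 0) => ⟨hz.le, ne_of_apply_ne re hz.ne⟩)
    (by rw [closure_setOfPred_re_lt]; exact inter_subset_left) ⟨hz, hz₀⟩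
  · exact fun z hz => (continuousAt_const.mul
      ((continuousAt_cpow_const (neg_mem_slitPlane_of_re_nonpos hz.1 hz.2)).comp
        continuousAt_neg)).continuousWithinAt
  · refine ((continuousOn_integral_cexp_mul_cpow measurableSet_Ioo (fun t ht => ht.1)
      ((intervalIntegral.integrableOn_Ioo_rpow_iff ha).mpr ?_)).mono inter_subset_left).add
      (continuousOn_tailIBP ha hv₁)
    simp only [sub_re, one_re]; linarith

end TailIBP

section Mellin

variable {a M : ℝ} {f : ℝ → ℂ} {s : ℂ}

lemma setIntegral_mul_cpow_eq_mellin {S : Set ℝ} (hS : MeasurableSet S) (hS₀ : S ⊆ Ioi 0)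
    (f : ℝ → ℂ) (s : ℂ) : ∫ t in S, f t * (t : ℂ) ^ (s - 1) = mellin (S.indicator f) s := by
  have h := setIntegral_indicator (μ := volume) (s := Ioi 0) hS
    (f := fun t : ℝ => (t : ℂ) ^ (s - 1) • f t)
  simp only [indicator_smul_apply, inter_eq_right.mpr hS₀] at h
  rw [mellin, h]
  simp_rw [smul_eq_mul, mul_comm]

lemma differentiableAt_integral_Ioi_mul_cpow (ha : 0 < a) (hf : Continuous f)
    (hM : ∀ t ∈ Ioi a, ‖f t‖ ≤ M) (hs : s.re < 0) :
    DifferentiableAt ℂ (fun s => ∫ t in Ioi a, f t * (t : ℂ) ^ (s - 1)) s := by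
  simp_rw [setIntegral_mul_cpow_eq_mellin measurableSet_Ioi (Ioi_subset_Ioi ha.le) f]
  refine mellin_differentiableAt_of_isBigO_rpow (a := 0) (b := s.re - 1)
    ((hf.locallyIntegrable.indicator measurableSet_Ioi).locallyIntegrableOn _) ?_ hs ?_
    (by linarith)
  · refine IsBigO.of_bound M ?_
    filter_upwards [eventually_gt_atTop a] with t ht
    simpa [indicator_of_mem (show t ∈ Ioi a from ht)] using hM t ht
  · refine EventuallyEq.trans_isBigO ?_ (isBigO_zero _ _)
    filter_upwards [Ioo_mem_nhdsGT ha] with t ht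
    exact indicator_of_notMem (not_lt.mpr ht.2.le) f

lemma differentiableAt_integral_Ioo_mul_cpow (ha : 0 < a) (hf : Continuous f)
    (hM : ∀ t ∈ Ioo 0 a, ‖f t‖ ≤ M) (hs : 0 < s.re) :
    DifferentiableAt ℂ (fun s => ∫ t in Ioo (0 : ℝ) a, f t * (t : ℂ) ^ (s - 1)) s := by
  simp_rw [setIntegral_mul_cpow_eq_mellin measurableSet_Ioo (fun t ht => ht.1) f]
  refine mellin_differentiableAt_of_isBigO_rpow (a := s.re + 1) (b := 0)
    ((hf.locallyIntegrable.indicator measurableSet_Ioo).locallyIntegrableOn _) ?_ (by linarith)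
    ?_ hs
  · refine EventuallyEq.trans_isBigO ?_ (isBigO_zero _ _)
    filter_upwards [eventually_ge_atTop a] with t ht
    exact indicator_of_notMem (fun h => (not_lt.mpr ht) h.2) f
  · refine IsBigO.of_bound M ?_
    filter_upwards [Ioo_mem_nhdsGT ha] with t ht
    simpa [indicator_of_mem ht] using hM t ht

end Mellin

lemma differentiableAt_tailIBP {a : ℝ} (ha : 0 < a) {z v : ℂ} (hz : z.re ≤ 0) (hv : v.re < 1) :
    DifferentiableAt ℂ (tailIBP a z) v := by
  have hexp : ∀ t ∈ Ioi a, ‖cexp (z * t)‖ ≤ 1 := fun t ht => by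
    rw [norm_exp, re_mul_ofReal]
    exact Real.exp_le_one_iff.mpr (mul_nonpos_of_nonpos_of_nonneg hz (ha.trans ht).le)
  have htail : DifferentiableAt ℂ (fun v => ∫ t in Ioi a, cexp (z * t) * (t : ℂ) ^ (v - 2)) v := by
    have := (differentiableAt_integral_Ioi_mul_cpow ha (by fun_prop) hexp (s := v - 1)
      (by simp only [sub_re, one_re]; linarith)).comp v (differentiableAt_id.sub_const 1)
    simpa [Function.comp_def, sub_sub, one_add_one_eq_two] using this
  exact ((((differentiableAt_id.sub_const 1).const_cpow
    (Or.inl (ofReal_ne_zero.mpr ha.ne'))).const_mul _).div_const _).neg.sub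
    (((differentiableAt_id.sub_const 1).div_const _).mul htail)

lemma two_mul_setIntegral_cos_mul_cpow {S : Set ℝ} (hS : MeasurableSet S) (hS₀ : S ⊆ Ioi 0)
    (ν : ℝ) {q : ℂ} (hq : IntegrableOn (fun t : ℝ => t ^ q.re) S) :
    2 * ∫ t in S, (Real.cos (ν * t) : ℂ) * (t : ℂ) ^ q
      = (∫ t in S, cexp (ν * I * t) * (t : ℂ) ^ q)
        + ∫ t in S, cexp (-(ν * I) * t) * (t : ℂ) ^ q := by
  rw [← integral_add (integrableOn_cexp_mul_cpow hS hS₀ (by simp) hq)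
    (integrableOn_cexp_mul_cpow hS hS₀ (by simp) hq), ← integral_const_mul]
  refine setIntegral_congr_fun hS fun t _ => ?_
  rw [ofReal_cos, ← mul_assoc, two_cos, add_mul]
  push_cast
  ring_nf

lemma two_mul_integral_Ioi_cos_mul_cpow_s5 {a ν : ℝ} (ha : 0 < a) (hν : ν ≠ 0) {v : ℂ}
    (hv : v.re < 0) :
    2 * ∫ t in Ioi a, (Real.cos (ν * t) : ℂ) * (t : ℂ) ^ (v - 1)
      = tailIBP a (ν * I) v + tailIBP a (-(ν * I)) v := by
  have hS₀ := Ioi_subset_Ioi ha.le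
  have hq : IntegrableOn (fun t : ℝ => t ^ (v - 1).re) (Ioi a) :=
    integrableOn_Ioi_rpow_of_lt (by simp only [sub_re, one_re]; linarith) ha
  have hz₀ : (ν : ℂ) * I ≠ 0 := mul_ne_zero (ofReal_ne_zero.mpr hν) I_ne_zero
  rw [two_mul_setIntegral_cos_mul_cpow measurableSet_Ioi hS₀ ν hq,
    integral_Ioi_cexp_mul_cpow_eq_tailIBP ha (by simp) hz₀ (by linarith)
      (integrableOn_cexp_mul_cpow measurableSet_Ioi hS₀ (by simp) hq),
    integral_Ioi_cexp_mul_cpow_eq_tailIBP ha (by simp) (neg_ne_zero.mpr hz₀) (by linarith)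
      (integrableOn_cexp_mul_cpow measurableSet_Ioi hS₀ (by simp) hq)]

lemma neg_mul_I_cpow_add_mul_I_cpow {ν : ℝ} (hν : 0 < ν) (w : ℂ) :
    (-(ν * I)) ^ (-w) + ((ν : ℂ) * I) ^ (-w) = 2 * Complex.cos (π * w / 2) * (ν : ℂ) ^ (-w) := by
  have hν₀ : (ν : ℂ) ≠ 0 := ofReal_ne_zero.mpr hν.ne'
  rw [← mul_neg, cpow_def_of_ne_zero (mul_ne_zero hν₀ (neg_ne_zero.mpr I_ne_zero)),
    cpow_def_of_ne_zero (mul_ne_zero hν₀ I_ne_zero), cpow_def_of_ne_zero hν₀,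
    log_ofReal_mul hν (neg_ne_zero.mpr I_ne_zero), log_ofReal_mul hν I_ne_zero, log_neg_I, log_I,
    ofReal_log hν.le, two_cos]
  simp only [add_mul, ← Complex.exp_add]
  ring_nf

lemma gammaPlus_mul_cpow {u : ℝ} (hu : 0 < u) (w : ℂ) :
    gammaPlus w * (u : ℂ) ^ (-w)
      = Gamma w * ((-(((2 * π * u : ℝ) : ℂ) * I)) ^ (-w) + (((2 * π * u : ℝ) : ℂ) * I) ^ (-w)) := by
  rw [neg_mul_I_cpow_add_mul_I_cpow (by positivity), gammaPlus,
    ofReal_mul, mul_cpow_ofReal_nonneg (by positivity) hu.le]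
  push_cast
  ring

lemma differentiableAt_gammaPlus {s : ℂ} (hs : ∀ m : ℕ, s ≠ -m) :
    DifferentiableAt ℂ gammaPlus s := by
  have h2π : 2 * (π : ℂ) ≠ 0 := mul_ne_zero two_ne_zero (ofReal_ne_zero.mpr pi_ne_zero)
  exact (((differentiableAt_neg_iff.mpr differentiableAt_id).const_cpow (Or.inl h2π)).const_mul 2
    |>.mul (by fun_prop)).mul (differentiableAt_Gamma s hs)

lemma tailIBP_add_tailIBP_neg_eq {a u : ℝ} (ha : 0 < a) (hu : 0 < u) {v : ℂ} (hv₀ : 0 < v.re)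
    (hv₁ : v.re < 1) :
    tailIBP a (((2 * π * u : ℝ) : ℂ) * I) v + tailIBP a (-(((2 * π * u : ℝ) : ℂ) * I)) v
      = gammaPlus v * (u : ℂ) ^ (-v)
        - 2 * ∫ t in Ioo (0 : ℝ) a, (Real.cos (2 * π * u * t) : ℂ) * (t : ℂ) ^ (v - 1) := by
  set z : ℂ := ((2 * π * u : ℝ) : ℂ) * I
  have hz₀ : z ≠ 0 := mul_ne_zero (ofReal_ne_zero.mpr (by positivity)) I_ne_zero
  have hz : z.re = 0 := by simp [z]
  have hpos := gamma_mul_neg_cpow_eq ha hv₀ hv₁ hz.le hz₀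
  have hneg := gamma_mul_neg_cpow_eq ha hv₀ hv₁ (z := -z) (by simp [hz]) (neg_ne_zero.mpr hz₀)
  rw [neg_neg] at hneg
  rw [gammaPlus_mul_cpow hu, two_mul_setIntegral_cos_mul_cpow measurableSet_Ioo (fun t ht => ht.1)
    _ ((intervalIntegral.integrableOn_Ioo_rpow_iff ha).mpr
      (by simp only [sub_re, one_re]; linarith))]
  linear_combination -hpos - hneg

lemma integral_Ioo_cpow {a : ℝ} (ha : 0 < a) {q : ℂ} (hq : -1 < q.re) :
    ∫ t in Ioo (0 : ℝ) a, (t : ℂ) ^ q = (a : ℂ) ^ (q + 1) / (q + 1) := by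
  have hq₁ : q + 1 ≠ 0 := fun h => by
    have := congrArg re (eq_neg_of_add_eq_zero_left h)
    simp only [neg_re, one_re] at this
    linarith
  rw [← integral_Ioc_eq_integral_Ioo, ← intervalIntegral.integral_of_le ha.le,
    integral_cpow (Or.inl hq), ofReal_zero, zero_cpow hq₁, sub_zero]

lemma integral_Ioo_cos_mul_cpow_eq_tsum {a : ℝ} (ha : 0 < a) (ν : ℝ) {w : ℂ} (hw : 0 < w.re) :
    ∫ t in Ioo (0 : ℝ) a, (Real.cos (ν * t) : ℂ) * (t : ℂ) ^ (w - 1)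
      = ∑' j : ℕ, ((-1 : ℂ) ^ j / ((2 * j)! : ℂ)) * (ν : ℂ) ^ (2 * j)
          * (a : ℂ) ^ ((2 * j : ℕ) + w) / ((2 * j : ℕ) + w) := by
  set c : ℕ → ℂ := fun j => (-1 : ℂ) ^ j / ((2 * j)! : ℂ) * (ν : ℂ) ^ (2 * j)
  set F : ℕ → ℝ → ℂ := fun j t => c j * ((t : ℂ) ^ (2 * j) * (t : ℂ) ^ (w - 1))
  have hK : IntegrableOn (fun t : ℝ => t ^ (w.re - 1)) (Ioo 0 a) :=
    (intervalIntegral.integrableOn_Ioo_rpow_iff ha).mpr (by linarith)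
  have hcpow (j : ℕ) {t : ℝ} (ht : 0 < t) :
      (t : ℂ) ^ (2 * j) * (t : ℂ) ^ (w - 1) = (t : ℂ) ^ ((2 * j : ℕ) + w - 1) := by
    rw [add_sub_assoc, cpow_add _ _ (ofReal_ne_zero.mpr ht.ne'), cpow_natCast]
  have hre (j : ℕ) : -1 < ((2 * j : ℕ) + w - 1).re := by
    simp only [sub_re, add_re, natCast_re, one_re]
    linarith [(2 * j : ℕ).cast_nonneg (α := ℝ)]
  have hF_int (j : ℕ) : IntegrableOn (F j) (Ioo 0 a) :=
    IntegrableOn.congr_fun (((intervalIntegral.integrableOn_Ioo_cpow_iff ha).mpr (hre j)).const_mul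
      (c j)) (fun t ht => by simp only [F, hcpow j ht.1]) measurableSet_Ioo
  have hF_norm (j : ℕ) :
      ∫ t in Ioo 0 a, ‖F j t‖ ≤ ‖c j‖ * a ^ (2 * j) * ∫ t in Ioo 0 a, t ^ (w.re - 1) := by
    rw [← integral_const_mul]
    refine setIntegral_mono_on (hF_int j).norm (hK.const_mul _) measurableSet_Ioo
      fun t ⟨ht₀, hta⟩ => ?_
    rw [norm_mul (c j), norm_mul ((t : ℂ) ^ (2 * j)), norm_pow, norm_real,
      norm_cpow_eq_rpow_re_of_pos ht₀, sub_re, one_re, Real.norm_of_nonneg ht₀.le, mul_assoc]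
    have := rpow_nonneg ht₀.le (w.re - 1)
    have := ht₀.le
    gcongr
  have hsummable : Summable fun j => ∫ t in Ioo 0 a, ‖F j t‖ := by
    refine Summable.of_nonneg_of_le (fun j => integral_nonneg fun t => norm_nonneg _) hF_norm
      (Summable.mul_right _ ?_)
    refine ((Real.summable_pow_div_factorial (|ν| * a)).comp_injective
      (mul_right_injective₀ two_ne_zero)).congr fun j => ?_
    simp only [c, Function.comp_apply, mul_pow, Complex.norm_mul, Complex.norm_div, norm_pow,
      norm_neg, norm_one, one_pow, RCLike.norm_natCast, norm_real, norm_eq_abs]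
    ring
  have hsum : ∀ t ∈ Ioo (0 : ℝ) a,
      ∑' j, F j t = (Real.cos (ν * t) : ℂ) * (t : ℂ) ^ (w - 1) := fun t _ => by
    rw [ofReal_cos, ofReal_mul]
    refine (((Complex.hasSum_cos (ν * t)).mul_right ((t : ℂ) ^ (w - 1))).congr_fun
      fun j => ?_).tsum_eq
    simp only [F, c, mul_pow]
    ring
  rw [← setIntegral_congr_fun measurableSet_Ioo hsum,
    ← integral_tsum_of_summable_integral_norm hF_int hsummable]
  refine tsum_congr fun j => ?_
  rw [integral_const_mul, setIntegral_congr_fun measurableSet_Ioo (fun t ht => hcpow j ht.1),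
    integral_Ioo_cpow ha (hre j), sub_add_cancel]
  ring

lemma differentiableAt_gammaPlus_mul_cpow_sub_integral {a u : ℝ} (ha : 0 < a) (hu : 0 < u) {v : ℂ}
    (hv : 0 < v.re) :
    DifferentiableAt ℂ (fun v => gammaPlus v * (u : ℂ) ^ (-v)
      - 2 * ∫ t in Ioo (0 : ℝ) a, (Real.cos (2 * π * u * t) : ℂ) * (t : ℂ) ^ (v - 1)) v := by
  have hΓ : ∀ m : ℕ, v ≠ -m := fun m h => by
    have := congrArg re h
    simp only [neg_re, natCast_re] at this
    linarith [m.cast_nonneg (α := ℝ)]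
  exact ((differentiableAt_gammaPlus hΓ).mul
    (differentiableAt_id.neg.const_cpow (Or.inl (ofReal_ne_zero.mpr hu.ne')))).sub
    ((differentiableAt_integral_Ioo_mul_cpow ha (by fun_prop) (M := 1)
      (fun t _ => by rw [norm_real, Real.norm_eq_abs]; exact abs_cos_le_one _) hv).const_mul 2)

/-- let `a > 0`, `u > 0` and let `C` be the entire extension of
`w ↦ 2∫_a^∞ cos(2πut) t^(w−1) dt` (defined for `Re(w) < 0`). Then for `Re(w) > 0`,
`C(w) = γ₊(w) u^(−w) − 2∫₀^a cos(2πut) t^(w−1) dt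
      = γ₊(w) u^(−w) − 2 Σ_{j≥0} ((−1)^j/(2j)!) (2πu)^(2j) a^(2j+w)/(2j+w)`. -/
theorem statement5 (a u : ℝ) (ha : 0 < a) (hu : 0 < u)
    (C : ℂ → ℂ) (hC : Differentiable ℂ C)
    (hCint : ∀ w : ℂ, w.re < 0 →
      C w = 2 * ∫ t in Ioi a, (Real.cos (2 * π * u * t) : ℂ) * (t : ℂ) ^ (w - 1))
    (w : ℂ) (hw : 0 < w.re) :
    C w = gammaPlus w * (u : ℂ) ^ (-w)
        - 2 * ∫ t in Ioo (0:ℝ) a, (Real.cos (2 * π * u * t) : ℂ) * (t : ℂ) ^ (w - 1) ∧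
    C w = gammaPlus w * (u : ℂ) ^ (-w)
        - 2 * ∑' j : ℕ, ((-1 : ℂ) ^ j / (Nat.factorial (2 * j) : ℂ))
            * ((2 * π * u : ℝ) : ℂ) ^ (2 * j)
            * (a : ℂ) ^ ((2 * j : ℕ) + w) / ((2 * j : ℕ) + w) := by
  set z : ℂ := ((2 * π * u : ℝ) : ℂ) * I
  have hz : z.re = 0 := by simp [z]
  have hCE : EqOn C (fun v => tailIBP a z v + tailIBP a (-z) v) {v | v.re < 1} := by
    refine hC.differentiableOn.eqOn_of_eqOn_isOpen
      (fun v hv => ((differentiableAt_tailIBP ha hz.le hv).add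
        (differentiableAt_tailIBP ha (by simp [hz]) hv)).differentiableWithinAt)
      (isOpen_lt continuous_re continuous_const) (convex_halfSpace_re_lt 1).isPreconnected
      (isOpen_lt continuous_re continuous_const) (fun v (hv : v.re < 0) => hv.trans one_pos)
      (v := -1) (by simp) fun v hv => ?_
    rw [hCint v hv, two_mul_integral_Ioi_cos_mul_cpow_s5 ha (by positivity) hv]
  have hCR : EqOn C (fun v => gammaPlus v * (u : ℂ) ^ (-v)
      - 2 * ∫ t in Ioo (0 : ℝ) a, (Real.cos (2 * π * u * t) : ℂ) * (t : ℂ) ^ (v - 1))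
      {v | 0 < v.re} := by
    refine hC.differentiableOn.eqOn_of_eqOn_isOpen (fun v (hv : 0 < v.re) =>
        (differentiableAt_gammaPlus_mul_cpow_sub_integral ha hu hv).differentiableWithinAt)
      (isOpen_lt continuous_const continuous_re) (convex_halfSpace_re_gt 0).isPreconnected
      ((isOpen_lt continuous_const continuous_re).inter (isOpen_lt continuous_re continuous_const))
      inter_subset_left (v := 1 / 2) (by norm_num) fun v hv =>
        (hCE hv.2).trans (tailIBP_add_tailIBP_neg_eq ha hu hv.1 hv.2)
  refine ⟨hCR hw, (hCR hw).trans ?_⟩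
  beta_reduce
  rw [integral_Ioo_cos_mul_cpow_eq_tsum ha _ hw]
end
end
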